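/- Let H be a complex Hilbert space and let V ⊆ B(H) be a linear subspace containing every compact operator on H. Then the identity map is the only V-map on B(H): every completely contractive linear map φ : B(H) → B(H) with φ(v) = v for all v ∈ V is the identity map on B(H). -/

import Mathlib

variable {H : Type*} [NormedAddCommGroup H] [InnerProductSpace ℂ H] [CompleteSpace H]

/-- The bounded operator on the Hilbert space `H ⊕ ⋯ ⊕ H` (with its ℓ²-norm)
induced by an `n × n` matrix of bounded operators on `H`. -/
noncomputable def matOp {H : Type*} [NormedAddCommGroup H] [InnerProductSpace ℂ H]
    {n : ℕ} (A : Matrix (Fin n) (Fin n) (H →L[ℂ] H)) :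
    PiLp 2 (fun _ : Fin n => H) →L[ℂ] PiLp 2 (fun _ : Fin n => H) :=
  ((PiLp.continuousLinearEquiv 2 ℂ (fun _ : Fin n => H)).symm.toContinuousLinearMap.comp
      (ContinuousLinearMap.pi fun i => ∑ j, (A i j).comp (ContinuousLinearMap.proj j))).comp
    (PiLp.continuousLinearEquiv 2 ℂ (fun _ : Fin n => H)).toContinuousLinearMap

/-- A linear map on `B(H)` is completely contractive if all of its matrix amplifications
are contractive with respect to the C*-norms on `Mₙ(B(H)) ≅ B(H ⊕ ⋯ ⊕ H)`. -/
def FullCC {H : Type*} [NormedAddCommGroup H] [InnerProductSpace ℂ H]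
    (φ : (H →L[ℂ] H) →ₗ[ℂ] (H →L[ℂ] H)) : Prop :=
  ∀ (n : ℕ) (A : Matrix (Fin n) (Fin n) (H →L[ℂ] H)), ‖matOp (A.map φ)‖ ≤ ‖matOp A‖

/-- An `S`-map: a completely contractive linear map of `B(H)` fixing `S` pointwise. -/
def IsSMap {H : Type*} [NormedAddCommGroup H] [InnerProductSpace ℂ H]
    (S : Set (H →L[ℂ] H)) (φ : (H →L[ℂ] H) →ₗ[ℂ] (H →L[ℂ] H)) : Prop :=
  FullCC φ ∧ ∀ s ∈ S, φ s = s

/-- A minimal `S`-projection: an idempotent `S`-map whose seminorm `T ↦ ‖E T‖`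
is minimal among the seminorms of all `S`-maps. -/
def IsMinimalSProj {H : Type*} [NormedAddCommGroup H] [InnerProductSpace ℂ H]
    (S : Set (H →L[ℂ] H)) (E : (H →L[ℂ] H) →ₗ[ℂ] (H →L[ℂ] H)) : Prop :=
  IsSMap S E ∧ E ∘ₗ E = E ∧
    ∀ ψ : (H →L[ℂ] H) →ₗ[ℂ] (H →L[ℂ] H), IsSMap S ψ →
      (∀ T, ‖ψ T‖ ≤ ‖E T‖) → ∀ T, ‖ψ T‖ = ‖E T‖

/-!
Suppose `w = (φ T - T) u ≠ 0` for a unit vector `u`, and let `k` be the rank-one operator such that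
`T - k` agrees with `T` on `(ℂ ∙ u)ᗮ` and sends `u` to `c • w`. Pythagoras and Cauchy–Schwarz give
`‖T - k‖² ≤ ‖T‖² + c²‖w‖²`. As `k` is compact, `φ (T - k) = φ T - k`, which sends `u` to
`(1 + c) • w`; so contractivity forces `(1 + 2c)‖w‖² ≤ ‖T‖²` for every `c`, absurd for large `c`.
-/

open InnerProductSpace ContinuousLinearMap

section
variable {E : Type*} [NormedAddCommGroup E] [InnerProductSpace ℂ E]

lemma matOp_apply {n : ℕ} (A : Matrix (Fin n) (Fin n) (E →L[ℂ] E))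
    (v : PiLp 2 (fun _ : Fin n => E)) (i : Fin n) :
    matOp A v i = ∑ j, A i j (v j) := by
  simp [matOp, ContinuousLinearMap.pi, ContinuousLinearMap.proj]

lemma norm_matOp_of_fin_one (A : Matrix (Fin 1) (Fin 1) (E →L[ℂ] E)) :
    ‖matOp A‖ = ‖A 0 0‖ := by
  have norm_piLp (v : PiLp 2 (fun _ : Fin 1 => E)) : ‖v‖ = ‖v 0‖ := by
    simp [PiLp.norm_eq_of_L2, Real.sqrt_sq]
  refine le_antisymm (opNorm_le_bound _ (norm_nonneg _) fun v => ?_)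
    (opNorm_le_bound _ (norm_nonneg (matOp A)) fun x => ?_)
  · simpa [norm_piLp, matOp_apply] using (A 0 0).le_opNorm (v 0)
  · simpa [norm_piLp, matOp_apply] using (matOp A).le_opNorm (WithLp.toLp 2 fun _ => x)

lemma FullCC.norm_apply_le {φ : (E →L[ℂ] E) →ₗ[ℂ] (E →L[ℂ] E)} (h : FullCC φ)
    (T : E →L[ℂ] E) : ‖φ T‖ ≤ ‖T‖ := by
  simpa [norm_matOp_of_fin_one] using h 1 (Matrix.of fun _ _ => T)

lemma isCompactOperator_rankOne (x y : E) : IsCompactOperator (rankOne ℂ x y) :=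
  (isCompactOperator_of_locallyCompactSpace_dom (innerSL ℂ y)).clm_comp (toSpanSingleton ℂ x)

lemma norm_sq_eq_norm_sub_inner_smul_sq_add {u : E} (hu : ‖u‖ = 1) (y : E) :
    ‖y‖ ^ 2 = ‖y - ⟪u, y⟫_ℂ • u‖ ^ 2 + ‖⟪u, y⟫_ℂ‖ ^ 2 := by
  have horth : ⟪y - ⟪u, y⟫_ℂ • u, ⟪u, y⟫_ℂ • u⟫_ℂ = 0 := by
    simp [inner_self_eq_norm_sq_to_K, hu]
  have := norm_add_sq_eq_norm_sq_add_norm_sq_of_inner_eq_zero _ _ horth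
  rwa [sub_add_cancel, norm_smul, hu, mul_one, ← sq, ← sq, ← sq] at this

lemma norm_sub_rankOne_sub_le {u : E} (hu : ‖u‖ = 1) (T : E →L[ℂ] E) (z : E) :
    ‖T - rankOne ℂ (T u - z) u‖ ≤ √(‖T‖ ^ 2 + ‖z‖ ^ 2) := by
  refine opNorm_le_bound _ (Real.sqrt_nonneg _) fun y => ?_
  set α := ⟪u, y⟫_ℂ
  have hsplit : (T - rankOne ℂ (T u - z) u) y = T (y - α • u) + α • z := by
    simp only [sub_apply, rankOne_apply, map_sub, map_smul, α]
    abel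
  calc ‖(T - rankOne ℂ (T u - z) u) y‖ ≤ ‖T‖ * ‖y - α • u‖ + ‖z‖ * ‖α‖ := by
        rw [hsplit]
        exact (norm_add_le _ _).trans
          (add_le_add (T.le_opNorm _) ((norm_smul_le α z).trans_eq (mul_comm _ _)))
    _ ≤ √(‖T‖ ^ 2 + ‖z‖ ^ 2) * √(‖y - α • u‖ ^ 2 + ‖α‖ ^ 2) := by
        simpa using Real.sum_mul_le_sqrt_mul_sqrt Finset.univ ![‖T‖, ‖z‖] ![‖y - α • u‖, ‖α‖]
    _ = √(‖T‖ ^ 2 + ‖z‖ ^ 2) * ‖y‖ := by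
        rw [← norm_sq_eq_norm_sub_inner_smul_sq_add hu, Real.sqrt_sq (norm_nonneg y)]

variable {φ : (E →L[ℂ] E) →ₗ[ℂ] (E →L[ℂ] E)}

lemma norm_apply_sub_apply_add_sq_le (hcontr : ∀ T, ‖φ T‖ ≤ ‖T‖)
    (hfix : ∀ x y : E, φ (rankOne ℂ x y) = rankOne ℂ x y) {u : E} (hu : ‖u‖ = 1)
    (T : E →L[ℂ] E) (z : E) : ‖(φ T - T) u + z‖ ^ 2 ≤ ‖T‖ ^ 2 + ‖z‖ ^ 2 := by
  set k := rankOne ℂ (T u - z) u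
  have hk : (φ T - k) u = (φ T - T) u + z := by
    simp only [k, sub_apply, rankOne_apply, inner_self_eq_norm_sq_to_K, hu, Complex.coe_algebraMap,
      Complex.ofReal_one, one_pow, one_smul]
    abel
  have : ‖(φ T - T) u + z‖ ≤ √(‖T‖ ^ 2 + ‖z‖ ^ 2) :=
    calc ‖(φ T - T) u + z‖ = ‖(φ T - k) u‖ := by rw [hk]
      _ ≤ ‖φ T - k‖ := by simpa [hu] using (φ T - k).le_opNorm u
      _ = ‖φ (T - k)‖ := by rw [map_sub, hfix]
      _ ≤ ‖T - k‖ := hcontr _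
      _ ≤ √(‖T‖ ^ 2 + ‖z‖ ^ 2) := norm_sub_rankOne_sub_le hu T z
  exact (Real.le_sqrt (norm_nonneg _) (by positivity)).1 this

lemma apply_eq_self_of_norm_apply_le_of_fixes_rankOne (hcontr : ∀ T, ‖φ T‖ ≤ ‖T‖)
    (hfix : ∀ x y : E, φ (rankOne ℂ x y) = rankOne ℂ x y) (T : E →L[ℂ] E) : φ T = T := by
  have hunit {u : E} (hu : ‖u‖ = 1) : (φ T - T) u = 0 := by
    set δ := ‖(φ T - T) u‖
    have hbound (c : ℝ) : ((1 + c) * δ) ^ 2 ≤ ‖T‖ ^ 2 + (c * δ) ^ 2 := by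
      have := norm_apply_sub_apply_add_sq_le hcontr hfix hu T (c • (φ T - T) u)
      have hsum : (φ T - T) u + c • (φ T - T) u = (1 + c) • (φ T - T) u := by
        rw [add_smul, one_smul]
      rwa [hsum, norm_smul, norm_smul, Real.norm_eq_abs, Real.norm_eq_abs, mul_pow,
        mul_pow, sq_abs, sq_abs, ← mul_pow, ← mul_pow] at this
    by_contra hne
    have hδ : 0 < δ := norm_pos_iff.2 hne
    have := hbound (‖T‖ ^ 2 / δ ^ 2)
    -- `hbound` says `δ² + 2cδ² ≤ ‖T‖²`, which fails at `c = ‖T‖² / δ²`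
    field_simp at this
    nlinarith
  ext x
  rcases eq_or_ne x 0 with rfl | hx
  · simp
  · have := hunit (norm_smul_inv_norm (𝕜 := ℂ) hx)
    rw [map_smul, smul_eq_zero, sub_apply, sub_eq_zero] at this
    exact this.resolve_left (by simpa using hx)

end

/-- If a linear subspace `V ⊆ B(H)` contains every compact operator,
then the only `V`-map on `B(H)` is the identity. -/
theorem stmt_8 (V : Submodule ℂ (H →L[ℂ] H))
    (hK : ∀ T : H →L[ℂ] H, IsCompactOperator T → T ∈ V)
    (φ : (H →L[ℂ] H) →ₗ[ℂ] (H →L[ℂ] H)) (hφ : IsSMap (V : Set (H →L[ℂ] H)) φ) :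
    ∀ T : H →L[ℂ] H, φ T = T :=
  apply_eq_self_of_norm_apply_le_of_fixes_rankOne hφ.1.norm_apply_le
    fun x y => hφ.2 _ (hK _ (isCompactOperator_rankOne x y))
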